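/- arXiv:1004.3342 — 7 statements merged into one kernel-verified Lean document; each statement's English description precedes it below -/
import Mathlib

section
/- Each of the relations E⁰, E², E⁴ is a convex equivalence relation on the set of nonstandard elements of M. -/
/-- `a` is a nonstandard element: above every natural number cast. -/
def Nonstd {M : Type*} [CommSemiring M] [LinearOrder M] [IsStrictOrderedRing M] (a : M) : Prop :=
  ∀ n : ℕ, (n : M) < a

def E0 {M : Type*} [CommSemiring M] [LinearOrder M] [IsStrictOrderedRing M] (a b : M) : Prop :=
  ∃ n : ℕ, a < b + (n : M) ∧ b < a + (n : M)

def E1 {M : Type*} [CommSemiring M] [LinearOrder M] [IsStrictOrderedRing M] (a b : M) : Prop :=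
  ∃ c : M, (∀ n : ℕ, (n : M) * c < a ∧ (n : M) * c < b) ∧ a < b + c ∧ b < a + c

def E2 {M : Type*} [CommSemiring M] [LinearOrder M] [IsStrictOrderedRing M] (a b : M) : Prop :=
  ∃ n : ℕ, a < (n : M) * b ∧ b < (n : M) * a

def E3 {M : Type*} [CommSemiring M] [LinearOrder M] [IsStrictOrderedRing M] (a b : M) : Prop :=
  ∃ c : M, (∀ n : ℕ, c ^ n < a ∧ c ^ n < b) ∧ a < b * c ∧ b < a * c

def E4 {M : Type*} [CommSemiring M] [LinearOrder M] [IsStrictOrderedRing M] (a b : M) : Prop :=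
  ∃ n : ℕ, a < b ^ n ∧ b < a ^ n

/-- `a E⁵ b`: some order automorphism of `M` maps `a` to `b`. -/
def E5 {M : Type*} [CommSemiring M] [LinearOrder M] [IsStrictOrderedRing M] (a b : M) : Prop :=
  ∃ f : M ≃o M, f a = b

/-- `E` is a convex equivalence relation on the nonstandard elements of `M`. -/
def IsConvexEquiv {M : Type*} [CommSemiring M] [LinearOrder M] [IsStrictOrderedRing M] (E : M → M → Prop) : Prop :=
  (∀ a : M, Nonstd a → E a a) ∧
  (∀ a b : M, Nonstd a → Nonstd b → E a b → E b a) ∧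
  (∀ a b c : M, Nonstd a → Nonstd b → Nonstd c → E a b → E b c → E a c) ∧
  (∀ a b c : M, Nonstd a → Nonstd b → Nonstd c → a ≤ b → b ≤ c → E a c → E a b)

/-- An almost `{<,+}`-isomorphism: an order isomorphism whose additivity error is finite. -/
def IsAlmostAddIso {M₁ M₂ : Type*} [CommSemiring M₁] [LinearOrder M₁] [IsStrictOrderedRing M₁]
    [CommSemiring M₂] [LinearOrder M₂] [IsStrictOrderedRing M₂] (f : M₁ ≃o M₂) : Prop :=
  ∀ a b : M₁, ∃ n : ℕ, f (a + b) < f a + f b + (n : M₂) ∧ f a + f b < f (a + b) + (n : M₂)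

/-- `M` is 2-order-rigid. -/
def OrderRigid2 (M : Type*) [CommSemiring M] [LinearOrder M] [IsStrictOrderedRing M] : Prop :=
  ∀ a b : M, Nonstd a → Nonstd b →
    Nonempty ({x : M // x < a} ≃o {x : M // x < b}) → E2 a b

/-- `M` is 3-order-rigid. -/
def OrderRigid3 (M : Type*) [CommSemiring M] [LinearOrder M] [IsStrictOrderedRing M] : Prop :=
  ∀ a b : M, Nonstd a → Nonstd b →
    Nonempty ({x : M // x < a} ≃o {x : M // x < b}) → E3 a b

/-- `M` is 4-order-rigid. -/
def OrderRigid4 (M : Type*) [CommSemiring M] [LinearOrder M] [IsStrictOrderedRing M] : Prop :=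
  ∀ a b : M, Nonstd a → Nonstd b →
    Nonempty ({x : M // x < a} ≃o {x : M // x < b}) → E4 a b

section

variable {M : Type*} [CommSemiring M] [LinearOrder M] [IsStrictOrderedRing M] {a b c : M}

theorem Nonstd.pos (ha : Nonstd a) : 0 < a := by
  simpa using ha 0

theorem Nonstd.one_lt (ha : Nonstd a) : 1 < a := by
  simpa using ha 1

namespace E0

theorem refl (a : M) : E0 a a :=
  ⟨1, by simp, by simp⟩

theorem symm (h : E0 a b) : E0 b a :=
  let ⟨n, hab, hba⟩ := h
  ⟨n, hba, hab⟩

theorem trans (hab : E0 a b) (hbc : E0 b c) : E0 a c := by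
  obtain ⟨n, h₁, h₂⟩ := hab
  obtain ⟨m, h₃, h₄⟩ := hbc
  refine ⟨n + m, ?_, ?_⟩ <;> push_cast
  · calc a < b + n := h₁
      _ < c + m + n := by gcongr
      _ = c + (n + m) := by ring
  · calc c < b + m := h₄
      _ < a + n + m := by gcongr
      _ = a + (n + m) := by ring

theorem of_le_of_le (hab : a ≤ b) (hbc : b ≤ c) (h : E0 a c) : E0 a b := by
  obtain ⟨n, -, hca⟩ := h
  refine ⟨n + 1, ?_, ?_⟩ <;> push_cast
  · calc a ≤ b := hab
      _ < b + (n + 1) := by simp only [lt_add_iff_pos_right]; positivity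
  · calc b ≤ c := hbc
      _ < a + n := hca
      _ ≤ a + (n + 1) := by simp

end E0

namespace E2

theorem refl (ha : 0 < a) : E2 a a :=
  have h : a < (2 : ℕ) * a := by rw [Nat.cast_ofNat, two_mul]; exact lt_add_of_pos_right a ha
  ⟨2, h, h⟩

theorem symm (h : E2 a b) : E2 b a :=
  let ⟨n, hab, hba⟩ := h
  ⟨n, hba, hab⟩

theorem trans (hab : E2 a b) (hbc : E2 b c) : E2 a c := by
  obtain ⟨n, h₁, h₂⟩ := hab
  obtain ⟨m, h₃, h₄⟩ := hbc
  refine ⟨n * m, ?_, ?_⟩ <;> push_cast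
  · calc a < n * b := h₁
      _ ≤ n * (m * c) := by gcongr
      _ = n * m * c := by ring
  · calc c < m * b := h₄
      _ ≤ m * (n * a) := by gcongr
      _ = n * m * a := by ring

theorem of_le_of_le (ha : 0 < a) (hab : a ≤ b) (hbc : b ≤ c) (h : E2 a c) : E2 a b := by
  obtain ⟨n, -, hca⟩ := h
  have hb : 0 < b := ha.trans_le hab
  refine ⟨n + 2, ?_, ?_⟩
  · calc a ≤ b := hab
      _ < ((n + 2 : ℕ) : M) * b := lt_mul_left hb (by norm_cast; omega)
  · calc b ≤ c := hbc
      _ < n * a := hca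
      _ ≤ ((n + 2 : ℕ) : M) * a := by gcongr; omega

end E2

namespace E4

theorem refl (ha : 1 < a) : E4 a a :=
  have h : a < a ^ 2 := lt_self_pow₀ ha one_lt_two
  ⟨2, h, h⟩

theorem symm (h : E4 a b) : E4 b a :=
  let ⟨n, hab, hba⟩ := h
  ⟨n, hba, hab⟩

theorem trans (hb : 0 ≤ b) (hab : E4 a b) (hbc : E4 b c) : E4 a c := by
  obtain ⟨n, h₁, h₂⟩ := hab
  obtain ⟨m, h₃, h₄⟩ := hbc
  refine ⟨n * m, ?_, ?_⟩
  · calc a < b ^ n := h₁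
      _ ≤ (c ^ m) ^ n := by gcongr
      _ = c ^ (n * m) := by rw [← pow_mul, mul_comm]
  · calc c < b ^ m := h₄
      _ ≤ (a ^ n) ^ m := by gcongr
      _ = a ^ (n * m) := (pow_mul a n m).symm

theorem of_le_of_le (ha : 1 < a) (hab : a ≤ b) (hbc : b ≤ c) (h : E4 a c) : E4 a b := by
  obtain ⟨n, -, hca⟩ := h
  refine ⟨n + 2, ?_, ?_⟩
  · calc a ≤ b := hab
      _ < b ^ (n + 2) := lt_self_pow₀ (ha.trans_le hab) (by omega)
  · calc b ≤ c := hbc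
      _ < a ^ n := hca
      _ ≤ a ^ (n + 2) := pow_le_pow_right₀ ha.le (by omega)

end E4

theorem isConvexEquiv_E0 : IsConvexEquiv (E0 (M := M)) :=
  ⟨fun a _ => E0.refl a, fun _ _ _ _ => E0.symm, fun _ _ _ _ _ _ => E0.trans,
    fun _ _ _ _ _ _ => E0.of_le_of_le⟩

theorem isConvexEquiv_E2 : IsConvexEquiv (E2 (M := M)) :=
  ⟨fun _ ha => E2.refl ha.pos, fun _ _ _ _ => E2.symm, fun _ _ _ _ _ _ => E2.trans,
    fun _ _ _ ha _ _ => E2.of_le_of_le ha.pos⟩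

theorem isConvexEquiv_E4 : IsConvexEquiv (E4 (M := M)) :=
  ⟨fun _ ha => E4.refl ha.one_lt, fun _ _ _ _ => E4.symm,
    fun _ _ _ _ hb _ => E4.trans hb.pos.le, fun _ _ _ ha _ _ => E4.of_le_of_le ha.one_lt⟩

end

theorem E0_E2_E4_convexEquiv_general {M : Type*} [CommSemiring M] [LinearOrder M] [IsStrictOrderedRing M] :
    IsConvexEquiv (E0 (M := M)) ∧ IsConvexEquiv (E2 (M := M)) ∧
      IsConvexEquiv (E4 (M := M)) :=
  ⟨isConvexEquiv_E0, isConvexEquiv_E2, isConvexEquiv_E4⟩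

/-- E⁰, E², E⁴ are convex equivalence relations on the nonstandard elements. -/
theorem E0_E2_E4_convexEquiv {M : Type*} [CommSemiring M] [LinearOrder M] [IsStrictOrderedRing M]
    (h0 : ∀ x : M, 0 ≤ x) :
    IsConvexEquiv (E0 (M := M)) ∧ IsConvexEquiv (E2 (M := M)) ∧
      IsConvexEquiv (E4 (M := M)) :=
  E0_E2_E4_convexEquiv_general
end

section
/- If a and b are nonstandard elements of M with a E³ b, then for every c ∈ M one has (∀ n : ℕ, c ^ n < a) if and only if (∀ n : ℕ, c ^ n < b). Moreover, for any nonstandard a, the set I_a = {c ∈ M : ∀ n : ℕ, c ^ n < a} is closed under addition and multiplication and is downward closed (if c' ≤ c and c ∈ I_a then c' ∈ I_a). -/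
/-!
If `a < b * e` with `e < b` and some power `c ^ n` reached `b`, then `c ^ n ≥ e` as well, so
`c ^ (2 * n) ≥ b * e > a`. Hence `c ∈ powersBelow a` forces `c ∈ powersBelow b`, and the witness of
`a E³ b` gives both inclusions. For the closure properties, `c + d` and `c * d` are dominated by
`2 * max c d` and `max c d ^ 2`, and `powersBelow a` contains the naturals and is closed under `max`
and under powers.
-/

def powersBelow {M : Type*} [Monoid M] [LT M] (a : M) : Set M :=
  {c | ∀ n : ℕ, c ^ n < a}

theorem max_mem_powersBelow {M : Type*} [Monoid M] [LinearOrder M] {a c d : M}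
    (hc : c ∈ powersBelow a) (hd : d ∈ powersBelow a) :
    max c d ∈ powersBelow a := by
  rcases max_choice c d with h | h <;> rw [h] <;> assumption

theorem pow_mem_powersBelow {M : Type*} [Monoid M] [LT M] {a c : M}
    (hc : c ∈ powersBelow a) (k : ℕ) : c ^ k ∈ powersBelow a :=
  fun n => by simpa only [← pow_mul] using hc (k * n)

theorem natCast_mem_powersBelow {M : Type*} [Semiring M] [LT M] {a : M}
    (ha : ∀ n : ℕ, (n : M) < a) (m : ℕ) :
    (m : M) ∈ powersBelow a :=
  fun n => by simpa only [Nat.cast_pow] using ha (m ^ n)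

section OrderedSemiring

variable {M : Type*} [Semiring M] [LinearOrder M] [IsOrderedRing M] {a b c d e : M}

theorem mem_powersBelow_of_le (hd : 0 ≤ d) (hdc : d ≤ c) (hc : c ∈ powersBelow a) :
    d ∈ powersBelow a :=
  fun n => (pow_le_pow_left₀ hd hdc n).trans_lt (hc n)

theorem mul_mem_powersBelow (hc₀ : 0 ≤ c) (hd₀ : 0 ≤ d) (hc : c ∈ powersBelow a)
    (hd : d ∈ powersBelow a) : c * d ∈ powersBelow a := by
  have hmax := max_mem_powersBelow hc hd
  have hle : c * d ≤ max c d ^ 2 := by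
    rw [sq]
    exact mul_le_mul (le_max_left c d) (le_max_right c d) hd₀ (hc₀.trans (le_max_left c d))
  exact mem_powersBelow_of_le (mul_nonneg hc₀ hd₀) hle (pow_mem_powersBelow hmax 2)

theorem add_mem_powersBelow (ha : ∀ n : ℕ, (n : M) < a) (hc₀ : 0 ≤ c) (hd₀ : 0 ≤ d)
    (hc : c ∈ powersBelow a) (hd : d ∈ powersBelow a) : c + d ∈ powersBelow a := by
  have hmax₀ : 0 ≤ max c d := hc₀.trans (le_max_left c d)
  have hle : c + d ≤ (2 : ℕ) * max c d := by
    rw [Nat.cast_ofNat, two_mul]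
    exact add_le_add (le_max_left c d) (le_max_right c d)
  exact mem_powersBelow_of_le (add_nonneg hc₀ hd₀) hle <| mul_mem_powersBelow (Nat.cast_nonneg 2)
    hmax₀ (natCast_mem_powersBelow ha 2) (max_mem_powersBelow hc hd)

theorem mem_powersBelow_of_lt_mul (he₀ : 0 ≤ e) (hc₀ : 0 ≤ c) (heb : e < b) (hab : a < b * e)
    (hc : c ∈ powersBelow a) : c ∈ powersBelow b := by
  intro n
  by_contra! hbc
  have hsq : b * e ≤ c ^ (2 * n) := by
    rw [two_mul, pow_add]
    exact mul_le_mul hbc (heb.le.trans hbc) he₀ (pow_nonneg hc₀ n)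
  exact (hc (2 * n)).not_ge (hab.trans_le hsq).le

end OrderedSemiring

theorem E3.powersBelow_eq {M : Type*} [CommSemiring M] [LinearOrder M] [IsStrictOrderedRing M]
    (h0 : ∀ x : M, 0 ≤ x) {a b : M} (hab : E3 a b) : powersBelow a = powersBelow b := by
  obtain ⟨e, he, hlt, hgt⟩ := hab
  ext c
  exact ⟨mem_powersBelow_of_lt_mul (h0 e) (h0 c) (by simpa only [pow_one] using (he 1).2) hlt,
    mem_powersBelow_of_lt_mul (h0 e) (h0 c) (by simpa only [pow_one] using (he 1).1) hgt⟩

/-- if `a E³ b` then `a,b` have the same `I`-set `{c : ∀ n, c ^ n < ·}`;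
moreover this set is closed under addition and multiplication and is downward closed. -/
theorem E3_same_powers_below {M : Type*} [CommSemiring M] [LinearOrder M] [IsStrictOrderedRing M]
    (h0 : ∀ x : M, 0 ≤ x) :
    (∀ a b : M, Nonstd a → Nonstd b → E3 a b →
      ∀ c : M, (∀ n : ℕ, c ^ n < a) ↔ (∀ n : ℕ, c ^ n < b)) ∧
    (∀ a : M, Nonstd a →
      (∀ c d : M, (∀ n : ℕ, c ^ n < a) → (∀ n : ℕ, d ^ n < a) →
        ∀ n : ℕ, (c + d) ^ n < a) ∧
      (∀ c d : M, (∀ n : ℕ, c ^ n < a) → (∀ n : ℕ, d ^ n < a) →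
        ∀ n : ℕ, (c * d) ^ n < a) ∧
      (∀ c c' : M, c' ≤ c → (∀ n : ℕ, c ^ n < a) → ∀ n : ℕ, c' ^ n < a)) := by
  refine ⟨fun a b _ _ hab c => Set.ext_iff.mp (E3.powersBelow_eq h0 hab) c,
    fun a ha => ⟨?_, ?_, ?_⟩⟩
  · exact fun c d hc hd => add_mem_powersBelow ha (h0 c) (h0 d) hc hd
  · exact fun c d hc hd => mul_mem_powersBelow (h0 c) (h0 d) hc hd
  · exact fun c c' hle hc => mem_powersBelow_of_le (h0 c') hle hc
end

section
/- For nonstandard elements a, b of M, there is an order isomorphism between the initial segments {x : x < a} and {x : x < b} if and only if there is an order automorphism f : M ≃o M with f a = b (that is, iff a E⁵ b). -/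
/-! Subtraction makes `x ↦ a + x` an order isomorphism from `M` onto `[a, ∞)`, so `[a, ∞)` and
`[b, ∞)` are isomorphic with `a ↦ b`. Splitting `M` as the lexicographic sum of `(-∞, a)` and
`[a, ∞)`, an isomorphism of the initial segments therefore extends to an automorphism of `M`
sending `a` to `b`; conversely an automorphism sending `a` to `b` restricts to the segments. -/

open Set

protected def OrderIso.Iio {α β : Type*} [Preorder α] [Preorder β] (e : α ≃o β) (x : α) :
    Iio x ≃o Iio (e x) where
  toEquiv := e.toEquiv.subtypeEquiv fun _ ↦ e.lt_iff_lt.symm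
  map_rel_iff' := e.le_iff_le

section AddLeftIci

variable {M : Type*} [AddCommMonoid M] [LinearOrder M] [IsOrderedCancelAddMonoid M]
  (h0 : ∀ x : M, 0 ≤ x) (hsub : ∀ a b : M, a ≤ b → ∃ c, b = a + c)

noncomputable def OrderIso.addLeftIci (a : M) : M ≃o Ici a :=
  StrictMono.orderIsoOfSurjective (fun x ↦ ⟨a + x, le_add_of_nonneg_right (h0 x)⟩)
    (fun _ _ h ↦ Subtype.mk_lt_mk.mpr (add_lt_add_right h a))
    (fun y ↦ (hsub a y y.2).imp fun _ hc ↦ Subtype.ext hc.symm)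

theorem OrderIso.addLeftIci_zero (a : M) : OrderIso.addLeftIci h0 hsub a 0 = ⟨a, le_rfl⟩ :=
  Subtype.ext (add_zero a)

theorem OrderIso.addLeftIci_symm_self (a : M) :
    (OrderIso.addLeftIci h0 hsub a).symm ⟨a, le_rfl⟩ = 0 :=
  (OrderIso.symm_apply_eq _).2 (OrderIso.addLeftIci_zero h0 hsub a).symm

end AddLeftIci

theorem initSeg_iso_iff_E5_general {M : Type*} [CommSemiring M] [LinearOrder M] [IsStrictOrderedRing M]
    (h0 : ∀ x : M, 0 ≤ x)
    (hsub : ∀ a b : M, a ≤ b → ∃ c, b = a + c)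
    (a b : M) :
    Nonempty ({x : M // x < a} ≃o {x : M // x < b}) ↔ ∃ f : M ≃o M, f a = b := by
  constructor
  · rintro ⟨g⟩
    let head : Iio a ≃o Iio b := g
    let tail : Ici a ≃o Ici b :=
      (OrderIso.addLeftIci h0 hsub a).symm.trans (OrderIso.addLeftIci h0 hsub b)
    refine ⟨(OrderIso.sumLexIioIci a).symm.trans ((head.sumLexCongr tail).trans
      (OrderIso.sumLexIioIci b)), ?_⟩
    have tail_apply : tail ⟨a, le_rfl⟩ = ⟨b, le_rfl⟩ := by
      simp only [tail, OrderIso.trans_apply, OrderIso.addLeftIci_symm_self,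
        OrderIso.addLeftIci_zero]
    simp only [OrderIso.trans_apply, OrderIso.sumLexIioIci_symm_apply_of_ge le_rfl,
      OrderIso.sumLexCongr_apply, ofLex_toLex, Sum.map_inr, tail_apply,
      OrderIso.sumLexIioIci_apply_inr]
  · rintro ⟨f, rfl⟩
    exact ⟨f.Iio a⟩

/-- the initial segments below nonstandard `a` and `b` are order isomorphic
iff some order automorphism of `M` maps `a` to `b`. -/
theorem initSeg_iso_iff_E5 {M : Type*} [CommSemiring M] [LinearOrder M] [IsStrictOrderedRing M]
    (h0 : ∀ x : M, 0 ≤ x)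
    (hsub : ∀ a b : M, a ≤ b → ∃ c, b = a + c)
    (a b : M) (ha : Nonstd a) (hb : Nonstd b) :
    Nonempty ({x : M // x < a} ≃o {x : M // x < b}) ↔ ∃ f : M ≃o M, f a = b :=
  initSeg_iso_iff_E5_general h0 hsub a b
end

section
/- Define the relation E' on the nonstandard elements of M by: a E' b iff there is an order automorphism f : M ≃o M with max a b ≤ f (min a b). Then E' is a convex equivalence relation on the nonstandard elements of M, E⁵ is contained in E', and E' is contained in every convex equivalence relation on the nonstandard elements of M that contains E⁵ (so E' is the smallest convex equivalence relation containing E⁵). -/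
/-- The relation `E'`: some order automorphism moves `min a b` above `max a b`. -/
def Eprime {M : Type*} [CommSemiring M] [LinearOrder M] [IsStrictOrderedRing M] (a b : M) : Prop :=
  ∃ f : M ≃o M, max a b ≤ f (min a b)

/-! `a E' b` says exactly that each of `a`, `b` lies below an automorphic image of the other.
That relation is the symmetric part of a preorder, hence an equivalence, and it is convex because
being below an image of `a` is a downward-closed condition. If `a ≤ b ≤ f a`, then `a E⁵ f a` and
convexity give `a E b`, so every convex equivalence containing `E⁵` contains `E'`. -/

section AutDominates

variable {α : Type*} [Preorder α]

def AutDominates (a b : α) : Prop :=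
  ∃ f : α ≃o α, b ≤ f a

theorem AutDominates.of_le {a b : α} (h : b ≤ a) : AutDominates a b :=
  ⟨OrderIso.refl α, h⟩

theorem AutDominates.refl (a : α) : AutDominates a a :=
  .of_le le_rfl

theorem AutDominates.trans {a b c : α} (hab : AutDominates a b) (hbc : AutDominates b c) :
    AutDominates a c := by
  obtain ⟨f, hf⟩ := hab
  obtain ⟨g, hg⟩ := hbc
  exact ⟨f.trans g, hg.trans (g.monotone hf)⟩

theorem AutDominates.mono_right {a b c : α} (h : AutDominates a c) (hbc : b ≤ c) :
    AutDominates a b := by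
  obtain ⟨f, hf⟩ := h
  exact ⟨f, hbc.trans hf⟩

theorem autDominates_apply (f : α ≃o α) (a : α) : AutDominates a (f a) :=
  ⟨f, le_rfl⟩

theorem autDominates_apply_left (f : α ≃o α) (a : α) : AutDominates (f a) a :=
  ⟨f.symm, by simp⟩

end AutDominates

section Eprime

variable {M : Type*} [CommSemiring M] [LinearOrder M] [IsStrictOrderedRing M]

theorem eprime_iff_autDominates {a b : M} :
    Eprime a b ↔ AutDominates a b ∧ AutDominates b a := by
  rcases le_total a b with h | h
  · simp only [Eprime, max_eq_right h, min_eq_left h]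
    exact ⟨fun hab => ⟨hab, .of_le h⟩, And.left⟩
  · simp only [Eprime, max_eq_left h, min_eq_right h]
    exact ⟨fun hba => ⟨.of_le h, hba⟩, And.right⟩

theorem isConvexEquiv_eprime : IsConvexEquiv (Eprime (M := M)) := by
  simp only [IsConvexEquiv, eprime_iff_autDominates]
  refine ⟨fun a _ => ⟨.refl a, .refl a⟩, fun a b _ _ h => h.symm,
    fun a b c _ _ _ hab hbc => ⟨hab.1.trans hbc.1, hbc.2.trans hab.2⟩,
    fun a b c _ _ _ hab hbc hac => ⟨hac.1.mono_right hbc, .of_le hab⟩⟩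

theorem E5.eprime {a b : M} (h : E5 a b) : Eprime a b := by
  obtain ⟨f, rfl⟩ := h
  exact eprime_iff_autDominates.2 ⟨autDominates_apply f a, autDominates_apply_left f a⟩

theorem IsConvexEquiv.rel_of_autDominates {E : M → M → Prop} (hE : IsConvexEquiv E)
    (hE5 : ∀ a b : M, Nonstd a → Nonstd b → E5 a b → E a b) {a b : M} (ha : Nonstd a)
    (hb : Nonstd b) (hab : a ≤ b) (h : AutDominates a b) : E a b := by
  obtain ⟨f, hf⟩ := h
  have hfa : Nonstd (f a) := fun n => (hb n).trans_le hf
  exact hE.2.2.2 a b (f a) ha hb hfa hab hf (hE5 a (f a) ha hfa ⟨f, rfl⟩)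

end Eprime

theorem Eprime_smallest_convex_containing_E5_general {M : Type*} [CommSemiring M] [LinearOrder M] [IsStrictOrderedRing M] :
    IsConvexEquiv (Eprime (M := M)) ∧
    (∀ a b : M, Nonstd a → Nonstd b → E5 a b → Eprime a b) ∧
    (∀ E : M → M → Prop, IsConvexEquiv E →
      (∀ a b : M, Nonstd a → Nonstd b → E5 a b → E a b) →
      ∀ a b : M, Nonstd a → Nonstd b → Eprime a b → E a b) := by
  refine ⟨isConvexEquiv_eprime, fun a b _ _ h => h.eprime, ?_⟩
  intro E hE hE5 a b ha hb hab
  obtain ⟨hab, hba⟩ := eprime_iff_autDominates.1 hab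
  rcases le_total a b with h | h
  · exact hE.rel_of_autDominates hE5 ha hb h hab
  · exact hE.2.1 b a hb ha (hE.rel_of_autDominates hE5 hb ha h hba)

/-- `E'` is the smallest convex equivalence relation on the nonstandard
elements containing `E⁵`. -/
theorem Eprime_smallest_convex_containing_E5 {M : Type*} [CommSemiring M] [LinearOrder M] [IsStrictOrderedRing M]
    (h0 : ∀ x : M, 0 ≤ x) :
    IsConvexEquiv (Eprime (M := M)) ∧
    (∀ a b : M, Nonstd a → Nonstd b → E5 a b → Eprime a b) ∧
    (∀ E : M → M → Prop, IsConvexEquiv E →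
      (∀ a b : M, Nonstd a → Nonstd b → E5 a b → E a b) →
      ∀ a b : M, Nonstd a → Nonstd b → Eprime a b → E a b) :=
  Eprime_smallest_convex_containing_E5_general
end

section
/- Let f : M₁ ≃o M₂ be an order isomorphism. Then for all nonstandard a, b ∈ M₁: a E⁰ b in M₁ if and only if f a E⁰ f b in M₂ (in particular f maps nonstandard elements to nonstandard elements). -/
theorem OrderIso.map_zero_of_nonneg {α β : Type*} [LE α] [Zero α] [PartialOrder β] [Zero β]
    (f : α ≃o β) (h0α : ∀ x : α, 0 ≤ x) (h0β : ∀ x : β, 0 ≤ x) : f 0 = 0 :=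
  le_antisymm (by simpa using f.le_iff_le.mpr (h0α (f.symm 0))) (h0β _)

section Discrete

variable {M₁ M₂ : Type*}
  [CommSemiring M₁] [LinearOrder M₁] [IsStrictOrderedRing M₁]
  [CommSemiring M₂] [LinearOrder M₂] [IsStrictOrderedRing M₂]

theorem covBy_add_one_of_discrete (hd : ∀ a x : M₁, ¬(a < x ∧ x < a + 1)) (a : M₁) :
    a ⋖ a + 1 :=
  ⟨lt_add_one a, fun x hax hxa => hd a x ⟨hax, hxa⟩⟩

namespace OrderIso

variable (f : M₁ ≃o M₂)

/-- Order isomorphisms preserve covers, and `x + 1` is the unique cover of `x`. -/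
theorem map_add_one_of_discrete (hd₁ : ∀ a x : M₁, ¬(a < x ∧ x < a + 1))
    (hd₂ : ∀ a x : M₂, ¬(a < x ∧ x < a + 1)) (x : M₁) : f (x + 1) = f x + 1 :=
  ((apply_covBy_apply_iff f).mpr (covBy_add_one_of_discrete hd₁ x)).unique_right
    (covBy_add_one_of_discrete hd₂ (f x))

theorem map_add_natCast_of_discrete (hd₁ : ∀ a x : M₁, ¬(a < x ∧ x < a + 1))
    (hd₂ : ∀ a x : M₂, ¬(a < x ∧ x < a + 1)) (x : M₁) (n : ℕ) : f (x + n) = f x + n := by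
  induction n with
  | zero => simp
  | succ n ih =>
    rw [Nat.cast_succ, Nat.cast_succ, ← add_assoc, f.map_add_one_of_discrete hd₁ hd₂, ih,
      add_assoc]

theorem E0_apply_iff_of_discrete (hd₁ : ∀ a x : M₁, ¬(a < x ∧ x < a + 1))
    (hd₂ : ∀ a x : M₂, ¬(a < x ∧ x < a + 1)) (a b : M₁) : E0 (f a) (f b) ↔ E0 a b := by
  simp only [E0, ← f.map_add_natCast_of_discrete hd₁ hd₂, f.lt_iff_lt]

theorem map_natCast_of_discrete (h0₁ : ∀ x : M₁, 0 ≤ x) (h0₂ : ∀ x : M₂, 0 ≤ x)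
    (hd₁ : ∀ a x : M₁, ¬(a < x ∧ x < a + 1)) (hd₂ : ∀ a x : M₂, ¬(a < x ∧ x < a + 1)) (n : ℕ) :
    f n = n := by
  simpa [f.map_zero_of_nonneg h0₁ h0₂] using f.map_add_natCast_of_discrete hd₁ hd₂ 0 n

theorem nonstd_apply_of_discrete (h0₁ : ∀ x : M₁, 0 ≤ x) (h0₂ : ∀ x : M₂, 0 ≤ x)
    (hd₁ : ∀ a x : M₁, ¬(a < x ∧ x < a + 1)) (hd₂ : ∀ a x : M₂, ¬(a < x ∧ x < a + 1)) {a : M₁}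
    (ha : Nonstd a) : Nonstd (f a) := fun n => by
  simpa only [f.map_natCast_of_discrete h0₁ h0₂ hd₁ hd₂] using f.lt_iff_lt.mpr (ha n)

end OrderIso

end Discrete

theorem orderIso_maps_E0_general {M₁ M₂ : Type*}
    [CommSemiring M₁] [LinearOrder M₁] [IsStrictOrderedRing M₁] [CommSemiring M₂] [LinearOrder M₂] [IsStrictOrderedRing M₂]
    (h0₁ : ∀ x : M₁, 0 ≤ x) (h0₂ : ∀ x : M₂, 0 ≤ x)
    (hd₁ : ∀ a x : M₁, ¬(a < x ∧ x < a + 1)) (hd₂ : ∀ a x : M₂, ¬(a < x ∧ x < a + 1))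
    (f : M₁ ≃o M₂) (a b : M₁) (ha : Nonstd a) :
    Nonstd (f a) ∧ (E0 a b ↔ E0 (f a) (f b)) :=
  ⟨f.nonstd_apply_of_discrete h0₁ h0₂ hd₁ hd₂ ha, (f.E0_apply_iff_of_discrete hd₁ hd₂ a b).symm⟩

/-- an order isomorphism maps `E⁰` onto `E⁰` (and nonstandard elements to
nonstandard elements). -/
theorem orderIso_maps_E0 {M₁ M₂ : Type*}
    [CommSemiring M₁] [LinearOrder M₁] [IsStrictOrderedRing M₁] [CommSemiring M₂] [LinearOrder M₂] [IsStrictOrderedRing M₂]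
    (h0₁ : ∀ x : M₁, 0 ≤ x) (h0₂ : ∀ x : M₂, 0 ≤ x)
    (hd₁ : ∀ a x : M₁, ¬(a < x ∧ x < a + 1)) (hd₂ : ∀ a x : M₂, ¬(a < x ∧ x < a + 1))
    (f : M₁ ≃o M₂) (a b : M₁) (ha : Nonstd a) (hb : Nonstd b) :
    Nonstd (f a) ∧ (E0 a b ↔ E0 (f a) (f b)) :=
  orderIso_maps_E0_general h0₁ h0₂ hd₁ hd₂ f a b ha
end

section
/- Let a₁, a₂, b₁, b₂ be nonstandard elements of M. For each ℓ ∈ {2, 3, 4}: if a₁ Eℓ b₁ and a₂ Eℓ b₂, then (a₁ * a₂) Eℓ (b₁ * b₂). -/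
section

variable {M : Type*} [CommSemiring M] [LinearOrder M] [IsStrictOrderedRing M] {a₁ a₂ b₁ b₂ : M}

theorem Nonstd.one_le {a : M} (ha : Nonstd a) : 1 ≤ a := by
  simpa using (ha 1).le

theorem Nonstd.nonneg {a : M} (ha : Nonstd a) : 0 ≤ a :=
  zero_le_one.trans ha.one_le

theorem E2.mul (h₁ : E2 a₁ b₁) (h₂ : E2 a₂ b₂) (ha₁ : 0 ≤ a₁) (ha₂ : 0 ≤ a₂)
    (hb₁ : 0 ≤ b₁) (hb₂ : 0 ≤ b₂) : E2 (a₁ * a₂) (b₁ * b₂) := by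
  obtain ⟨n, hab₁, hba₁⟩ := h₁
  obtain ⟨m, hab₂, hba₂⟩ := h₂
  refine ⟨n * m, ?_, ?_⟩
  · calc a₁ * a₂ < (n * b₁) * (m * b₂) := mul_lt_mul'' hab₁ hab₂ ha₁ ha₂
      _ = ((n * m : ℕ) : M) * (b₁ * b₂) := by push_cast; ring
  · calc b₁ * b₂ < (n * a₁) * (m * a₂) := mul_lt_mul'' hba₁ hba₂ hb₁ hb₂
      _ = ((n * m : ℕ) : M) * (a₁ * a₂) := by push_cast; ring

theorem E3.mul (h₁ : E3 a₁ b₁) (h₂ : E3 a₂ b₂) (ha₁ : 0 ≤ a₁) (ha₂ : 0 ≤ a₂)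
    (hb₁ : 0 ≤ b₁) (hb₂ : 0 ≤ b₂) : E3 (a₁ * a₂) (b₁ * b₂) := by
  obtain ⟨c₁, hc₁, hab₁, hba₁⟩ := h₁
  obtain ⟨c₂, hc₂, hab₂, hba₂⟩ := h₂
  have hc₁_pos : 0 < c₁ := pos_of_mul_pos_right (ha₁.trans_lt hab₁) hb₁
  have hc₂_pos : 0 < c₂ := pos_of_mul_pos_right (ha₂.trans_lt hab₂) hb₂
  refine ⟨c₁ * c₂, fun n => ?_, ?_, ?_⟩
  · rw [mul_pow]
    have hc₁n := pow_nonneg hc₁_pos.le n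
    have hc₂n := pow_nonneg hc₂_pos.le n
    exact ⟨mul_lt_mul'' (hc₁ n).1 (hc₂ n).1 hc₁n hc₂n, mul_lt_mul'' (hc₁ n).2 (hc₂ n).2 hc₁n hc₂n⟩
  · calc a₁ * a₂ < (b₁ * c₁) * (b₂ * c₂) := mul_lt_mul'' hab₁ hab₂ ha₁ ha₂
      _ = (b₁ * b₂) * (c₁ * c₂) := by ring
  · calc b₁ * b₂ < (a₁ * c₁) * (a₂ * c₂) := mul_lt_mul'' hba₁ hba₂ hb₁ hb₂
      _ = (a₁ * a₂) * (c₁ * c₂) := by ring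

theorem E4.mul (h₁ : E4 a₁ b₁) (h₂ : E4 a₂ b₂) (ha₁ : 1 ≤ a₁) (ha₂ : 1 ≤ a₂)
    (hb₁ : 1 ≤ b₁) (hb₂ : 1 ≤ b₂) : E4 (a₁ * a₂) (b₁ * b₂) := by
  obtain ⟨n, hab₁, hba₁⟩ := h₁
  obtain ⟨m, hab₂, hba₂⟩ := h₂
  refine ⟨max n m, ?_, ?_⟩
  · rw [mul_pow]
    exact mul_lt_mul''
      (hab₁.trans_le (pow_le_pow_right₀ hb₁ (le_max_left n m)))
      (hab₂.trans_le (pow_le_pow_right₀ hb₂ (le_max_right n m)))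
      (zero_le_one.trans ha₁) (zero_le_one.trans ha₂)
  · rw [mul_pow]
    exact mul_lt_mul''
      (hba₁.trans_le (pow_le_pow_right₀ ha₁ (le_max_left n m)))
      (hba₂.trans_le (pow_le_pow_right₀ ha₂ (le_max_right n m)))
      (zero_le_one.trans hb₁) (zero_le_one.trans hb₂)

end

theorem E_mul_general {M : Type*} [CommSemiring M] [LinearOrder M] [IsStrictOrderedRing M]
    (a₁ a₂ b₁ b₂ : M) (ha₁ : Nonstd a₁) (ha₂ : Nonstd a₂)
    (hb₁ : Nonstd b₁) (hb₂ : Nonstd b₂) :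
    (E2 a₁ b₁ → E2 a₂ b₂ → E2 (a₁ * a₂) (b₁ * b₂)) ∧
    (E3 a₁ b₁ → E3 a₂ b₂ → E3 (a₁ * a₂) (b₁ * b₂)) ∧
    (E4 a₁ b₁ → E4 a₂ b₂ → E4 (a₁ * a₂) (b₁ * b₂)) :=
  ⟨fun h₁ h₂ => h₁.mul h₂ ha₁.nonneg ha₂.nonneg hb₁.nonneg hb₂.nonneg,
   fun h₁ h₂ => h₁.mul h₂ ha₁.nonneg ha₂.nonneg hb₁.nonneg hb₂.nonneg,
   fun h₁ h₂ => h₁.mul h₂ ha₁.one_le ha₂.one_le hb₁.one_le hb₂.one_le⟩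

/-- each of `E², E³, E⁴` is preserved under multiplication. -/
theorem E_mul {M : Type*} [CommSemiring M] [LinearOrder M] [IsStrictOrderedRing M]
    (h0 : ∀ x : M, 0 ≤ x)
    (a₁ a₂ b₁ b₂ : M) (ha₁ : Nonstd a₁) (ha₂ : Nonstd a₂)
    (hb₁ : Nonstd b₁) (hb₂ : Nonstd b₂) :
    (E2 a₁ b₁ → E2 a₂ b₂ → E2 (a₁ * a₂) (b₁ * b₂)) ∧
    (E3 a₁ b₁ → E3 a₂ b₂ → E3 (a₁ * a₂) (b₁ * b₂)) ∧
    (E4 a₁ b₁ → E4 a₂ b₂ → E4 (a₁ * a₂) (b₁ * b₂)) :=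
  E_mul_general a₁ a₂ b₁ b₂ ha₁ ha₂ hb₁ hb₂
end

section
/- If a and b are nonstandard elements of M and a E³ b, then there is an order automorphism f : M ≃o M with f a = b (that is, a E⁵ b). -/
/-!
Enlarge `c` to be at least `2` and let `J` be the set of elements below some power of `c`: an
additive cut containing `1` and closed under multiplication by `c`, but not containing `a`. Call two
elements near when they differ by an element of `J`. The map `x ↦ ⌊x b / a⌋` respects nearness in
both directions, so it induces an order automorphism of the chain of near-classes; it fixes the
class `J` and sends the class of `a` to that of `b`. Any other class consists of all points within
`J`-distance of any one of its points, above and below, so a translation carries it onto any other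
such class; gluing these translations (the one taking `a` to `b` on the class of `a`) lifts the
automorphism of classes to one of `M`.
-/
namespace AddSubmonoid

variable {M : Type*} [AddCommMonoid M] [LinearOrder M]

/-- `|x - y| ≤ j` for some `j ∈ J`, written without subtraction. -/
def Near (J : AddSubmonoid M) (x y : M) : Prop := ∃ j ∈ J, x ≤ y + j ∧ y ≤ x + j

variable {J : AddSubmonoid M} {x y u v : M}

theorem Near.refl (x : M) : J.Near x x := ⟨0, J.zero_mem, by simp, by simp⟩

theorem Near.symm (h : J.Near x y) : J.Near y x :=
  let ⟨j, hj, hxy, hyx⟩ := h; ⟨j, hj, hyx, hxy⟩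

theorem Near.mem_iff (hJ : IsLowerSet (J : Set M)) (h : J.Near x y) : x ∈ J ↔ y ∈ J := by
  obtain ⟨j, hj, hxy, hyx⟩ := h
  exact ⟨fun hx => hJ hyx (J.add_mem hx hj), fun hy => hJ hxy (J.add_mem hy hj)⟩

theorem near_zero_iff [CanonicallyOrderedAdd M] (hJ : IsLowerSet (J : Set M)) :
    J.Near x 0 ↔ x ∈ J :=
  ⟨fun h => (h.mem_iff hJ).2 J.zero_mem, fun hx => ⟨x, hx, by simp, zero_le⟩⟩

section Ordered

variable [IsOrderedCancelAddMonoid M]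

theorem Near.trans {z : M} (h : J.Near x y) (h' : J.Near y z) : J.Near x z := by
  obtain ⟨j, hj, hxy, hyx⟩ := h
  obtain ⟨j', hj', hyz, hzy⟩ := h'
  refine ⟨j + j', J.add_mem hj hj', ?_, ?_⟩
  · calc x ≤ y + j := hxy
      _ ≤ z + j' + j := by gcongr
      _ = z + (j + j') := by abel
  · calc z ≤ y + j' := hzy
      _ ≤ x + j + j' := by gcongr
      _ = x + (j + j') := by abel

theorem near_equivalence : Equivalence J.Near := ⟨Near.refl, Near.symm, Near.trans⟩

theorem Near.of_add_eq_add {p q : M} (h : p + u = q + x) (hux : J.Near u x) : J.Near p q := by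
  obtain ⟨j, hj, hux, hxu⟩ := hux
  refine ⟨j, hj, le_of_add_le_add_right (a := u) ?_, le_of_add_le_add_right (a := x) ?_⟩
  · calc p + u = q + x := h
      _ ≤ q + (u + j) := by gcongr
      _ = q + j + u := by abel
  · calc q + x = p + u := h.symm
      _ ≤ p + (x + j) := by gcongr
      _ = p + j + x := by abel

theorem Near.le_add_of_notMem (hJ : IsLowerSet (J : Set M)) (h : J.Near u x) (hv : v ∉ J) :
    u ≤ x + v := by
  obtain ⟨j, hj, hux, -⟩ := h
  have hjv : j ≤ v := le_of_lt (lt_of_not_ge fun hvj => hv (hJ hvj hj))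
  exact hux.trans (by gcongr)

variable [CanonicallyOrderedAdd M]

theorem lt_of_near_of_near {x' y' : M} (hxy : x < y) (hn : ¬ J.Near x y) (hx : J.Near x x')
    (hy : J.Near y y') : x' < y' := by
  by_contra! hyx
  obtain ⟨j, hj, -, hx'x⟩ := hx
  obtain ⟨j', hj', hyy', -⟩ := hy
  refine hn ⟨j + j', J.add_mem hj hj', hxy.le.trans le_self_add, ?_⟩
  calc y ≤ y' + j' := hyy'
    _ ≤ x + j + j' := by gcongr; exact hyx.trans hx'x
    _ = x + (j + j') := by abel

end Ordered

structure InducesQuotientAut (J : AddSubmonoid M) (φ : M → M) : Prop where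
  near : ∀ {x y}, J.Near x y → J.Near (φ x) (φ y)
  near_of_near : ∀ {x y}, J.Near (φ x) (φ y) → J.Near x y
  lt_of_lt : ∀ {x y}, x < y → ¬ J.Near x y → φ x < φ y
  exists_near : ∀ y, ∃ x, J.Near (φ x) y
  near_zero : J.Near (φ 0) 0

end AddSubmonoid

structure IsNormalForm {α : Type*} (r : α → α → Prop) (σ : α → α) : Prop where
  eq_of_rel : ∀ {x y}, r x y → σ x = σ y
  rel : ∀ x, r (σ x) x

theorem Equivalence.exists_isNormalForm {α : Type*} {r : α → α → Prop} (hr : Equivalence r)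
    {x y : α} (hxy : ¬ r x y) : ∃ σ, IsNormalForm r σ ∧ σ x = x ∧ σ y = y := by
  classical
  let s : Setoid α := ⟨r, hr⟩
  have hne : (⟦y⟧ : Quotient s) ≠ ⟦x⟧ := fun h => hxy (hr.symm (Quotient.exact h))
  let rep := Function.update (Function.update (Quotient.out : Quotient s → α) ⟦y⟧ y) ⟦x⟧ x
  have hrep : ∀ q, ⟦rep q⟧ = q := by
    intro q
    by_cases hqx : q = ⟦x⟧
    · subst hqx; simp [rep]
    by_cases hqy : q = ⟦y⟧
    · subst hqy; simp [rep, hne]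
    simp [rep, hqx, hqy]
  refine ⟨fun z => rep ⟦z⟧, ⟨fun h => congrArg rep (Quotient.sound h), fun z => ?_⟩, ?_, ?_⟩
  · exact Quotient.exact (hrep ⟦z⟧)
  · simp [rep]
  · simp [rep, hne]

namespace AddSubmonoid.InducesQuotientAut

open AddSubmonoid

variable {M : Type*} [AddCommMonoid M] [LinearOrder M] [IsOrderedCancelAddMonoid M]
  [CanonicallyOrderedAdd M] {J : AddSubmonoid M} {φ : M → M}

theorem mem_iff (hφ : InducesQuotientAut J φ) (hJ : IsLowerSet (J : Set M)) {x : M} :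
    φ x ∈ J ↔ x ∈ J := by
  rw [← near_zero_iff hJ, ← near_zero_iff hJ]
  exact ⟨fun h => hφ.near_of_near (h.trans hφ.near_zero.symm),
    fun h => (hφ.near h).trans hφ.near_zero⟩

theorem exists_orderIso_translate (hφ : InducesQuotientAut J φ) (hJ : IsLowerSet (J : Set M))
    {σ τ : M → M} (hσ : IsNormalForm J.Near σ) (hτ : IsNormalForm J.Near τ) (hσ0 : σ 0 = 0)
    (hτ0 : τ 0 = 0) : ∃ f : M ≃o M, ∀ x, f x + σ x = x + τ (φ x) := by
  have hσJ {x : M} (hx : x ∈ J) : σ x = 0 := (hσ.eq_of_rel ((near_zero_iff hJ).2 hx)).trans hσ0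
  have hτJ {x : M} (hx : x ∈ J) : τ x = 0 := (hτ.eq_of_rel ((near_zero_iff hJ).2 hx)).trans hτ0
  have hle (x : M) : σ x ≤ x + τ (φ x) := by
    by_cases hx : x ∈ J
    · simp [hσJ hx]
    · refine (hσ.rel x).le_add_of_notMem hJ fun h => hx ?_
      exact (hφ.mem_iff hJ).1 (((hτ.rel _).mem_iff hJ).1 h)
  have hex (x : M) : ∃ y, y + σ x = x + τ (φ x) := by
    obtain ⟨y, hy⟩ := exists_add_of_le (hle x)
    exact ⟨y, by rw [hy, add_comm]⟩
  choose F hF using hex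
  have hFφ (x : M) : J.Near (F x) (φ x) :=
    (Near.of_add_eq_add ((hF x).trans (add_comm _ _)) (hσ.rel x)).trans (hτ.rel _)
  have hmono : StrictMono F := by
    intro x y hxy
    by_cases hn : J.Near x y
    · have hFx := hF x
      rw [hσ.eq_of_rel hn, hτ.eq_of_rel (hφ.near hn)] at hFx
      exact lt_of_add_lt_add_right (a := σ y) (by rw [hFx, hF y]; gcongr)
    · exact lt_of_near_of_near (hφ.lt_of_lt hxy hn) (fun h => hn (hφ.near_of_near h))
        (hFφ x).symm (hFφ y).symm
  have hsurj : Function.Surjective F := by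
    intro y
    obtain ⟨x₀, hx₀⟩ := hφ.exists_near y
    have hle' : τ y ≤ y + σ x₀ := by
      by_cases hy : y ∈ J
      · simp [hτJ hy]
      · refine (hτ.rel y).le_add_of_notMem hJ fun h => hy ?_
        exact (hx₀.mem_iff hJ).1 ((hφ.mem_iff hJ).2 (((hσ.rel x₀).mem_iff hJ).1 h))
    obtain ⟨x, hx⟩ := exists_add_of_le hle'
    have hxx₀ : J.Near x x₀ :=
      (Near.of_add_eq_add (by rw [add_comm, ← hx, add_comm]) (hτ.rel y)).trans (hσ.rel x₀)
    refine ⟨x, add_right_cancel (b := σ x) ?_⟩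
    rw [hF x, hσ.eq_of_rel hxx₀, hτ.eq_of_rel ((hφ.near hxx₀).trans hx₀), add_comm, ← hx]
  exact ⟨hmono.orderIsoOfSurjective F hsurj, hF⟩

theorem exists_orderIso_apply_eq (hφ : InducesQuotientAut J φ) (hJ : IsLowerSet (J : Set M))
    {a b : M} (ha : a ∉ J) (hab : J.Near (φ a) b) : ∃ f : M ≃o M, f a = b := by
  have hb : b ∉ J := fun hb => ha ((hφ.mem_iff hJ).1 ((hab.mem_iff hJ).2 hb))
  obtain ⟨σ, hσ, hσ0, hσa⟩ :=
    near_equivalence.exists_isNormalForm fun h => ha ((near_zero_iff hJ).1 h.symm)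
  obtain ⟨τ, hτ, hτ0, hτb⟩ :=
    near_equivalence.exists_isNormalForm fun h => hb ((near_zero_iff hJ).1 h.symm)
  obtain ⟨f, hf⟩ := hφ.exists_orderIso_translate hJ hσ hτ hσ0 hτ0
  have hfa := hf a
  rw [hσa, hτ.eq_of_rel hab, hτb, add_comm a b] at hfa
  exact ⟨f, add_right_cancel hfa⟩

end AddSubmonoid.InducesQuotientAut

section FloorMulDiv

variable {M : Type*} [CommSemiring M] [LinearOrder M] [IsStrictOrderedRing M]
  [CanonicallyOrderedAdd M]

theorem exists_mul_le_lt_mul_add_one (hdiv : ∀ a b : M, b ≠ 0 → ∃ q r : M, a = b * q + r ∧ r < b)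
    (n : M) {d : M} (hd : d ≠ 0) : ∃ q, d * q ≤ n ∧ n < d * (q + 1) := by
  obtain ⟨q, r, rfl, hr⟩ := hdiv n d hd
  exact ⟨q, le_self_add, by rw [mul_add_one]; gcongr⟩

/-- `φ x = ⌊x * b / a⌋`. -/
def IsFloorMulDiv (a b : M) (φ : M → M) : Prop := ∀ x, a * φ x ≤ x * b ∧ x * b < a * (φ x + 1)

variable {J : AddSubmonoid M} {a b c x y j : M} {φ : M → M}

namespace IsFloorMulDiv

open AddSubmonoid

theorem exists_of_ne_zero (hdiv : ∀ a b : M, b ≠ 0 → ∃ q r : M, a = b * q + r ∧ r < b)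
    (ha : a ≠ 0) : ∃ φ, IsFloorMulDiv a b φ := by
  choose φ hφ using fun x => exists_mul_le_lt_mul_add_one hdiv (x * b) ha
  exact ⟨φ, hφ⟩

theorem lt_add_of_le_add (hφ : IsFloorMulDiv a b φ) (hba : b < a * c) (hxy : y ≤ x + j) :
    φ y < φ x + (1 + j * c) := by
  refine lt_of_mul_lt_mul_left ?_ (zero_le (a := a))
  calc a * φ y ≤ y * b := (hφ y).1
    _ ≤ (x + j) * b := by gcongr
    _ = x * b + j * b := add_mul _ _ _
    _ < a * (φ x + 1) + j * (a * c) := add_lt_add_of_lt_of_le (hφ x).2 (by gcongr)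
    _ = a * (φ x + (1 + j * c)) := by ring

theorem lt_add_of_apply_le_add (hφ : IsFloorMulDiv a b φ) (hab : a < b * c)
    (h : φ x ≤ φ y + j) : x < y + (j + 1) * c := by
  refine lt_of_mul_lt_mul_right ?_ (zero_le (a := b))
  calc x * b < a * (φ x + 1) := (hφ x).2
    _ ≤ a * (φ y + j + 1) := by gcongr
    _ = a * φ y + a * (j + 1) := by ring
    _ ≤ y * b + b * c * (j + 1) := add_le_add (hφ y).1 (mul_le_mul_of_nonneg_right hab.le zero_le)
    _ = (y + (j + 1) * c) * b := by ring

theorem near_self (hφ : IsFloorMulDiv a b φ) (h1 : 1 ∈ J) (ha : 0 < a) : J.Near (φ a) b :=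
  ⟨1, h1, le_add_right (le_of_mul_le_mul_left (hφ a).1 ha),
    (lt_of_mul_lt_mul_left (hφ a).2 ha.le).le⟩

theorem exists_near (hφ : IsFloorMulDiv a b φ)
    (hdiv : ∀ a b : M, b ≠ 0 → ∃ q r : M, a = b * q + r ∧ r < b) (h1 : 1 ∈ J)
    (hc : ∀ j ∈ J, j * c ∈ J) (hab : a < b * c) (hba : b < a * c) (y : M) :
    ∃ x, J.Near (φ x) y := by
  have ha : 0 < a := pos_of_mul_pos_left (zero_le.trans_lt hba) zero_le
  have hb : 0 < b := pos_of_mul_pos_left (zero_le.trans_lt hab) zero_le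
  obtain ⟨x, hxy, hyx⟩ := exists_mul_le_lt_mul_add_one hdiv (y * a) hb.ne'
  refine ⟨x, 1 + c, J.add_mem h1 (by simpa using hc 1 h1), le_add_right ?_, ?_⟩
  · refine le_of_mul_le_mul_left ?_ ha
    calc a * φ x ≤ x * b := (hφ x).1
      _ ≤ a * y := by rw [mul_comm x, mul_comm a]; exact hxy
  · refine (lt_of_mul_lt_mul_right ?_ (zero_le (a := a))).le
    calc y * a < b * x + b := by rwa [← mul_add_one]
      _ < a * (φ x + 1) + a * c := by rw [mul_comm b]; exact add_lt_add (hφ x).2 hba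
      _ = (φ x + (1 + c)) * a := by ring

theorem inducesQuotientAut (hφ : IsFloorMulDiv a b φ)
    (hdiv : ∀ a b : M, b ≠ 0 → ∃ q r : M, a = b * q + r ∧ r < b) (h1 : 1 ∈ J)
    (hc : ∀ j ∈ J, j * c ∈ J) (hab : a < b * c) (hba : b < a * c) :
    J.InducesQuotientAut φ := by
  have ha : 0 < a := pos_of_mul_pos_left (zero_le.trans_lt hba) zero_le
  have near_of_near {x y : M} (h : J.Near (φ x) (φ y)) : J.Near x y := by
    obtain ⟨j, hj, hxy, hyx⟩ := h
    exact ⟨(j + 1) * c, hc _ (J.add_mem hj h1), (hφ.lt_add_of_apply_le_add hab hxy).le,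
      (hφ.lt_add_of_apply_le_add hab hyx).le⟩
  refine { near := ?_, near_of_near := near_of_near, lt_of_lt := ?_,
           exists_near := hφ.exists_near hdiv h1 hc hab hba, near_zero := ?_ }
  · rintro x y ⟨j, hj, hxy, hyx⟩
    exact ⟨1 + j * c, J.add_mem h1 (hc j hj), (hφ.lt_add_of_le_add hba hxy).le,
      (hφ.lt_add_of_le_add hba hyx).le⟩
  · intro x y hxy hn
    refine lt_of_not_ge fun hyx => hn (near_of_near ⟨1, h1, ?_, hyx.trans le_self_add⟩)
    refine (lt_of_mul_lt_mul_left ?_ ha.le).le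
    calc a * φ x ≤ y * b := (hφ x).1.trans (by gcongr)
      _ < a * (φ y + 1) := (hφ y).2
  · have hφ0 : φ 0 = 0 := by
      refine nonpos_iff_eq_zero.1 (le_of_mul_le_mul_left ?_ ha)
      simpa using (hφ 0).1
    rw [hφ0]
    exact Near.refl 0

end IsFloorMulDiv

end FloorMulDiv

namespace AddSubmonoid

variable {M : Type*} [CommSemiring M] [LinearOrder M] [IsStrictOrderedRing M]

def powBounded (c : M) (hc : 2 ≤ c) : AddSubmonoid M where
  carrier := {x | ∃ n : ℕ, x < c ^ n}
  zero_mem' := ⟨0, by simp⟩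
  add_mem' := by
    rintro x y ⟨n, hx⟩ ⟨m, hy⟩
    have hc1 : 1 ≤ c := one_le_two.trans hc
    refine ⟨max n m + 1, ?_⟩
    calc x + y < c ^ max n m + c ^ max n m :=
          add_lt_add (hx.trans_le (pow_le_pow_right₀ hc1 (le_max_left n m)))
            (hy.trans_le (pow_le_pow_right₀ hc1 (le_max_right n m)))
      _ = 2 * c ^ max n m := (two_mul _).symm
      _ ≤ c ^ (max n m + 1) := by rw [pow_succ']; gcongr

variable {c : M} {hc : 2 ≤ c}

theorem isLowerSet_powBounded : IsLowerSet (powBounded c hc : Set M) :=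
  fun _ _ hyx ⟨n, hn⟩ => ⟨n, hyx.trans_lt hn⟩

theorem one_mem_powBounded : 1 ∈ powBounded c hc := ⟨1, by simpa using one_lt_two.trans_le hc⟩

theorem mul_mem_powBounded {j : M} (hj : j ∈ powBounded c hc) : j * c ∈ powBounded c hc := by
  obtain ⟨n, hn⟩ := hj
  exact ⟨n + 1, by rw [pow_succ]; exact mul_lt_mul_of_pos_right hn (two_pos.trans_le hc)⟩

end AddSubmonoid

theorem Nonstd.exists_two_le_of_E3 {M : Type*} [CommSemiring M] [LinearOrder M]
    [IsStrictOrderedRing M] [CanonicallyOrderedAdd M] {a b : M} (ha : Nonstd a) (hab : E3 a b) :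
    ∃ c : M, 2 ≤ c ∧ (∀ n : ℕ, c ^ n < a) ∧ a < b * c ∧ b < a * c := by
  obtain ⟨c, hpow, hab, hba⟩ := hab
  refine ⟨max c 2, le_max_right c 2, fun n => ?_, hab.trans_le (by gcongr; exact le_max_left c 2),
    hba.trans_le (by gcongr; exact le_max_left c 2)⟩
  rcases le_total c 2 with hc | hc
  · rw [max_eq_right hc]; exact_mod_cast ha (2 ^ n)
  · rw [max_eq_left hc]; exact (hpow n).1

theorem E3_implies_E5_general {M : Type*} [CommSemiring M] [LinearOrder M] [IsStrictOrderedRing M]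
    (h0 : ∀ x : M, 0 ≤ x)
    (hsub : ∀ a b : M, a ≤ b → ∃ c, b = a + c)
    (hdiv : ∀ a b : M, b ≠ 0 → ∃ q r : M, a = b * q + r ∧ r < b)
    (a b : M) (ha : Nonstd a) (hab : E3 a b) :
    ∃ f : M ≃o M, f a = b := by
  have : CanonicallyOrderedAdd M :=
    { exists_add_of_le := fun {x y} => hsub x y
      le_add_self := fun x y => le_add_of_nonneg_left (h0 y)
      le_self_add := fun x y => le_add_of_nonneg_right (h0 y) }
  obtain ⟨c, hc, hca, hab, hba⟩ := ha.exists_two_le_of_E3 hab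
  have ha0 : 0 < a := by simpa using ha 0
  obtain ⟨φ, hφ⟩ := IsFloorMulDiv.exists_of_ne_zero (b := b) hdiv ha0.ne'
  have hJφ := IsFloorMulDiv.inducesQuotientAut (J := .powBounded c hc) hφ hdiv
    AddSubmonoid.one_mem_powBounded (fun _ => AddSubmonoid.mul_mem_powBounded) hab hba
  exact hJφ.exists_orderIso_apply_eq AddSubmonoid.isLowerSet_powBounded
    (fun ⟨n, hn⟩ => (hca n).not_gt hn) (hφ.near_self AddSubmonoid.one_mem_powBounded ha0)

/-- `a E³ b` implies `a E⁵ b`, i.e. some order automorphism of `M`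
maps `a` to `b`. -/
theorem E3_implies_E5 {M : Type*} [CommSemiring M] [LinearOrder M] [IsStrictOrderedRing M]
    (h0 : ∀ x : M, 0 ≤ x)
    (hsub : ∀ a b : M, a ≤ b → ∃ c, b = a + c)
    (hdiv : ∀ a b : M, b ≠ 0 → ∃ q r : M, a = b * q + r ∧ r < b)
    (a b : M) (ha : Nonstd a) (hb : Nonstd b) (hab : E3 a b) :
    ∃ f : M ≃o M, f a = b :=
  E3_implies_E5_general h0 hsub hdiv a b ha hab
end
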